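/- arXiv:1301.4938 — 2 statements merged into one kernel-verified Lean document; each statement's English description precedes it below -/
import Mathlib

section
/- Let ι be an index type equipped with a relation < and, for every pair i < j, a coercion map c i j : ε i → ε j between the associated sorts, such that the coercions compose: for all i < j < k, c j k ∘ c i j = c i k. Then for every chain i = i₀ < i₁ < ⋯ < iₙ = j (n ≥ 1), the composite c iₙ₋₁ iₙ ∘ ⋯ ∘ c i₀ i₁ of the coercions along the chain is equal to the direct coercion c i j. In other words, the derivation system for coercive subtyping introduces no new coercions between atomic types: every composite of basic coercions between two base types equals the designated basic coercion between them. -/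
/-- A chain `i = i₀ < i₁ < ⋯ < iₙ = j` (with `n ≥ 1`) of indices related by `lt`. -/
inductive Chain {ι : Type*} (lt : ι → ι → Prop) : ι → ι → Type _
  | single {i j : ι} : lt i j → Chain lt i j
  | cons {i j k : ι} : lt i j → Chain lt j k → Chain lt i k

/-- The composite `c iₙ₋₁ iₙ ∘ ⋯ ∘ c i₀ i₁` of the coercions along a chain. -/
def Chain.comp {ι : Type*} {lt : ι → ι → Prop} {ε : ι → Type*}
    (c : ∀ i j, lt i j → ε i → ε j) :
    ∀ {i j : ι}, Chain lt i j → ε i → ε j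
  | _, _, .single h => c _ _ h
  | _, _, .cons h ch => ch.comp c ∘ c _ _ h

theorem Chain.rel {ι : Type*} {lt : ι → ι → Prop} [IsTrans ι lt] :
    ∀ {i j : ι}, Chain lt i j → lt i j
  | _, _, .single h => h
  | _, _, .cons h ch => _root_.trans h ch.rel

/-- If the basic coercions compose (`c j k ∘ c i j = c i k` for all `i < j < k`),
then the composite of the coercions along any chain from `i` to `j` equals the
direct coercion `c i j`: the derivation system introduces no new coercions
between atomic types. -/
theorem chain_comp_eq_direct {ι : Type*} {lt : ι → ι → Prop} {ε : ι → Type*}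
    (c : ∀ i j, lt i j → ε i → ε j)
    (htrans : ∀ {i j k : ι}, lt i j → lt j k → lt i k)
    (hcomp : ∀ {i j k : ι} (h₁ : lt i j) (h₂ : lt j k) (h₃ : lt i k),
      c j k h₂ ∘ c i j h₁ = c i k h₃)
    {i j : ι} (ch : Chain lt i j) (hij : lt i j) :
    ch.comp c = c i j hij := by
  have : IsTrans ι lt := ⟨fun _ _ _ ↦ htrans⟩
  induction ch with
  | single h => rfl
  | cons hstep rest ih =>
    have hjk := rest.rel
    calc rest.comp c ∘ c _ _ hstep = c _ _ hjk ∘ c _ _ hstep := by rw [ih hjk]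
      _ = c _ _ hij := hcomp hstep hjk hij
end

section
/- Let Q be a quiver (directed graph) whose vertices are the base types, with an edge from i to j for each basic coercion, and let F be the prefunctor sending each vertex i to the sort ε i (an object of the category of types) and each edge from i to j to the basic coercion c i j : ε i → ε j. Assume the basic coercions satisfy the composition condition c j k ∘ c i j = c i k whenever the corresponding edges exist. Then the induced functor from the free (path) category on Q to the category of types maps any two parallel paths (paths with the same source i and the same target j, each of positive length) to the same function ε i → ε j, namely c i j. This expresses coherence for coercive subtyping: the free composition of basic coercions is, up to equality of functions, thin between base types. -/
/-!
Composing along the transitivity witnesses one edge at a time, the image of a path of positive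
length is the image of some edge `i ⟶ j`; since there is at most one such edge, all these images
coincide.
-/

open CategoryTheory

namespace CategoryTheory.Paths

variable {V : Type*} [Quiver V] {C : Type*} [Category C] (F : V ⥤q C)

theorem exists_lift_map_eq_map_of_length_pos
    (htrans : ∀ {i j k : V}, (i ⟶ j) → (j ⟶ k) → (i ⟶ k))
    (hcomp : ∀ {i j k : V} (e : i ⟶ j) (f : j ⟶ k), F.map e ≫ F.map f = F.map (htrans e f))
    {i j : V} (p : Quiver.Path i j) (hp : 0 < p.length) :
    ∃ e : i ⟶ j, (lift F).map (X := (of V).obj i) (Y := (of V).obj j) p = F.map e := by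
  induction p with
  | nil => simp at hp
  | cons p f ih =>
    rcases p with _ | ⟨p, f'⟩
    · exact ⟨f, lift_toPath F f⟩
    · obtain ⟨g, hg⟩ := ih (by simp)
      exact ⟨htrans g f,
        (lift_cons F _ f).trans ((eq_whisker hg (F.map f)).trans (hcomp g f))⟩

theorem lift_map_eq_map_of_length_pos (hsub : ∀ i j : V, Subsingleton (i ⟶ j))
    (htrans : ∀ {i j k : V}, (i ⟶ j) → (j ⟶ k) → (i ⟶ k))
    (hcomp : ∀ {i j k : V} (e : i ⟶ j) (f : j ⟶ k), F.map e ≫ F.map f = F.map (htrans e f))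
    {i j : V} (p : Quiver.Path i j) (hp : 0 < p.length) (e : i ⟶ j) :
    (lift F).map (X := (of V).obj i) (Y := (of V).obj j) p = F.map e := by
  obtain ⟨e', he'⟩ := exists_lift_map_eq_map_of_length_pos F htrans hcomp p hp
  rw [he', (hsub i j).elim e' e]

end CategoryTheory.Paths

/-- Coherence for coercive subtyping, categorically: let `V` be a quiver whose
vertices are the base types, and let `F` be the prefunctor into the category of
types sending each vertex `i` to the sort `F.obj i` and each edge `e : i ⟶ j`
(a basic coercion) to the function `F.map e : F.obj i → F.obj j`.  Assume there
is at most one edge between any two vertices, that edges compose (transitivity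
of the subtyping relation), and that the basic coercions compose:
`F.map f ∘ F.map e = F.map g` whenever the corresponding edges exist.  Then the
induced functor `Paths.lift F` from the free (path) category on `V` to the
category of types maps any two parallel paths of positive length from `i` to
`j` to the same function, namely the basic coercion `F.map e` attached to the
edge `e : i ⟶ j`. -/
theorem paths_lift_coherence {V : Type*} [Quiver.{u_1 + 1} V]
    (F : V ⥤q Type u_1)
    (hsub : ∀ i j : V, Subsingleton (i ⟶ j))
    (htrans : ∀ {i j k : V}, (i ⟶ j) → (j ⟶ k) → (i ⟶ k))
    (hcomp : ∀ {i j k : V} (e : i ⟶ j) (f : j ⟶ k) (g : i ⟶ k),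
      F.map f ∘ F.map e = F.map g)
    {i j : V} (p q : Quiver.Path i j) (hp : 0 < p.length) (hq : 0 < q.length)
    (e : i ⟶ j) :
    (Paths.lift F).map (X := (Paths.of V).obj i) (Y := (Paths.of V).obj j) p = F.map e ∧
    (Paths.lift F).map (X := (Paths.of V).obj i) (Y := (Paths.of V).obj j) p =
      (Paths.lift F).map (X := (Paths.of V).obj i) (Y := (Paths.of V).obj j) q := by
  have hcomp' : ∀ {i j k : V} (e : i ⟶ j) (f : j ⟶ k),
      F.map e ≫ F.map f = F.map (htrans e f) := fun e f =>
    TypeCat.homEquiv.injective (hcomp e f (htrans e f))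
  have hlift := Paths.lift_map_eq_map_of_length_pos F hsub htrans hcomp' (i := i) (j := j)
  exact ⟨hlift p hp e, (hlift p hp e).trans (hlift q hq e).symm⟩
end
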